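/- Let h>0, α,β∈(0,1], d≥1, let A be a real d×d matrix, γ: ℕ→ℝ^d a sequence, and x_a, x_0∈ℝ^d. Then the unique solution of the semilinear sequential Caputo initial value problem (C_β(C_α X))(n) = A·X(n) + γ(n), X(0)=x_a, (C_α X)(0)=x_0 is given for every n∈ℕ by X(n) = ∑_{k=0}^{n} A^k·( φ_{k,k}(n−k)·x_a + φ_{k+1,k}(n−k)·x_0 ) + ∑_{k=0}^{n} A^k·∑_{r=0}^{n−2(k+1)} φ̃_{k+1,k+1}(n−2(k+1)−r)·γ(r), where all inner sums with n−2(k+1)<0 are empty and all terms with 2k>n in the first sum vanish. -/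

import Mathlib

/-- `c γ m = Γ(γ+m)/(Γ(γ)·Γ(m+1))`. -/
noncomputable def cCoeff (γ : ℝ) (m : ℕ) : ℝ :=
  Real.Gamma (γ + m) / (Real.Gamma γ * Real.Gamma (m + 1))

/-- Caputo `h`-difference of order `α ∈ (0,1]` of an `ℝ^d`-valued sequence. -/
noncomputable def caputo (h α : ℝ) {d : ℕ} (u : ℕ → Fin d → ℝ) (n : ℕ) : Fin d → ℝ :=
  if α < 1 then
    h ^ (1 - α) • ∑ k ∈ Finset.range (n + 1), cCoeff (1 - α) (n - k) • (h⁻¹ • (u (k + 1) - u k))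
  else h⁻¹ • (u (n + 1) - u n)

/-- `X` solves the sequential Caputo initial value problem
`(C_β(C_α X))(n) = f(n, X(n))`, `X(0) = x_a`, `(C_α X)(0) = x_0`. -/
noncomputable def IsSolIVP (h α β : ℝ) {d : ℕ} (f : ℕ → (Fin d → ℝ) → Fin d → ℝ)
    (xa x0 : Fin d → ℝ) (X : ℕ → Fin d → ℝ) : Prop :=
  (∀ n : ℕ, caputo h β (caputo h α X) n = f n (X n)) ∧ X 0 = xa ∧ caputo h α X 0 = x0

/-- The function `φ_{k,s}` of the paper. -/
noncomputable def phi (h α β : ℝ) (k s : ℕ) (n : ℤ) : ℝ :=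
  if (k : ℤ) ≤ n then
    Real.Gamma ((n : ℝ) - (k : ℝ) + 1 + (k : ℝ) * α + (s : ℝ) * β)
      / (Real.Gamma ((k : ℝ) * α + (s : ℝ) * β + 1) * Real.Gamma ((n : ℝ) - (k : ℝ) + 1))
      * h ^ ((k : ℝ) * α + (s : ℝ) * β)
  else 0

/-- The function `φ̃_{k,s}` of the paper. -/
noncomputable def phiTilde (h α β : ℝ) (k s : ℕ) (m : ℤ) : ℝ :=
  if 0 ≤ m then
    Real.Gamma ((m : ℝ) + (k : ℝ) * α + (s : ℝ) * β)
      / (Real.Gamma ((k : ℝ) * α + (s : ℝ) * β) * Real.Gamma ((m : ℝ) + 1))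
      * h ^ ((k : ℝ) * α + (s : ℝ) * β)
  else 0

/-!
The Caputo difference `C_α` is inverted by the fractional sum with kernel `c_α`, because
`c_α ⋆ c_{1-α} = c_1 ≡ 1` (Chu–Vandermonde for `c_μ(m) = multichoose μ m`). Inverting `C_β` and
then `C_α` turns the IVP into the Volterra equation
`X n = x_a + φ_{1,0}(n) x_0 + ∑_{r<n} φ̃_{1,1}(n-2-r) (A X r + γ r)`,
whose solution is unique since `X n` only involves earlier values. Each `φ_{k,s}`, `φ̃_{k,s}` is a
power of `h` times a kernel `c_μ`, so convolving with `φ̃_{1,1}` maps `(k, s)` to `(k+1, s+1)`;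
hence the `k`-th term of the claimed series, multiplied by `A` and convolved with `φ̃_{1,1}`,
is the `(k+1)`-st, and the series satisfies the same Volterra equation.
-/

open Finset Matrix

theorem Ring.multichoose_add {R : Type*} [CommRing R] [BinomialRing R] (r s : R) (k : ℕ) :
    Ring.multichoose (r + s) k =
      ∑ ij ∈ antidiagonal k, Ring.multichoose r ij.1 * Ring.multichoose s ij.2 := by
  -- `multichoose r k = (-1)^k • choose (-r) k`: this is Chu–Vandermonde at `-r`, `-s`.
  have h := Ring.add_choose_eq k (Commute.all (-r) (-s))
  simp only [← neg_add, Ring.choose_neg', smul_mul_smul_comm, ← Int.negOnePow_add,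
    ← Nat.cast_add] at h
  rw [Finset.sum_congr rfl fun ij hij => by rw [mem_antidiagonal.mp hij], ← smul_sum] at h
  exact (Int.negOnePow k).isUnit.smul_left_cancel.mp h

theorem Real.Gamma_add_natCast (μ : ℝ) (hμ : 0 < μ) (m : ℕ) :
    Real.Gamma (μ + m) = (ascPochhammer ℝ m).eval μ * Real.Gamma μ := by
  induction m with
  | zero => simp
  | succ m ih =>
    rw [Nat.cast_succ, ← add_assoc, Real.Gamma_add_one (by positivity), ih,
      ascPochhammer_succ_eval]
    ring

theorem Real.Gamma_add_natCast_div_eq_multichoose (μ : ℝ) (hμ : 0 < μ) (m : ℕ) :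
    Real.Gamma (μ + m) / (Real.Gamma μ * Real.Gamma (m + 1)) = Ring.multichoose μ m := by
  have hfac := Ring.factorial_nsmul_multichoose_eq_ascPochhammer μ m
  rw [Polynomial.ascPochhammer_smeval_eq_eval, nsmul_eq_mul] at hfac
  rw [Real.Gamma_add_natCast μ hμ, Real.Gamma_nat_eq_factorial, ← hfac]
  have := (Real.Gamma_pos_of_pos hμ).ne'
  have : (m.factorial : ℝ) ≠ 0 := by positivity
  field_simp

theorem cCoeff_eq_multichoose {μ : ℝ} (hμ : 0 < μ) (m : ℕ) : cCoeff μ m = Ring.multichoose μ m :=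
  Real.Gamma_add_natCast_div_eq_multichoose μ hμ m

-- `c_μ` on `ℤ`, zero at negative arguments: convolution sums then need no truncated subtraction.
noncomputable def multichooseExt (μ : ℝ) (z : ℤ) : ℝ :=
  if 0 ≤ z then Ring.multichoose μ z.toNat else 0

@[simp]
theorem multichooseExt_natCast (μ : ℝ) (m : ℕ) : multichooseExt μ m = Ring.multichoose μ m := by
  simp [multichooseExt]

theorem multichooseExt_of_neg (μ : ℝ) {z : ℤ} (hz : z < 0) : multichooseExt μ z = 0 :=
  if_neg hz.not_ge

theorem multichooseExt_one_of_nonneg {z : ℤ} (hz : 0 ≤ z) : multichooseExt 1 z = 1 := by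
  simp [multichooseExt, hz, Ring.multichoose_one]

theorem sum_range_multichooseExt_mul (μ ν : ℝ) {n : ℕ} {s t : ℤ} (hs : s < n) (ht : 0 ≤ t) :
    ∑ r ∈ range n, multichooseExt μ (s - r) * multichooseExt ν (r - t) =
      multichooseExt (μ + ν) (s - t) := by
  rcases lt_or_ge s t with hst | hts
  · rw [multichooseExt_of_neg _ (by omega)]
    refine sum_eq_zero fun r _ => ?_
    rcases lt_or_ge s r with hsr | hrs
    · rw [multichooseExt_of_neg _ (by omega), zero_mul]
    · rw [multichooseExt_of_neg ν (by omega), mul_zero]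
  lift t to ℕ using ht
  obtain ⟨M, rfl⟩ : ∃ M : ℕ, s = t + M := ⟨(s - t).toNat, by omega⟩
  have hsupp : Ico t (t + M + 1) ⊆ range n := fun r hr => by
    simp only [mem_Ico, mem_range] at hr ⊢; omega
  rw [← sum_subset hsupp fun r hr hr' => ?_, sum_Ico_eq_sum_range,
    show t + M + 1 - t = M + 1 by omega, add_sub_cancel_left, multichooseExt_natCast, add_comm μ,
    Ring.multichoose_add,
    Nat.sum_antidiagonal_eq_sum_range_succ fun i j => Ring.multichoose ν i * Ring.multichoose μ j]
  · refine sum_congr rfl fun j hj => ?_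
    have hjM : j ≤ M := Nat.lt_succ_iff.mp (mem_range.mp hj)
    rw [mul_comm, show (t : ℤ) + M - ((t + j : ℕ) : ℤ) = ((M - j : ℕ) : ℤ) by push_cast; omega,
      show ((t + j : ℕ) : ℤ) - t = (j : ℤ) by push_cast; ring, multichooseExt_natCast,
      multichooseExt_natCast]
  · simp only [mem_Ico, mem_range, not_and, not_lt] at hr hr'
    rcases lt_or_ge r t with hrt | htr
    · rw [multichooseExt_of_neg ν (by omega), mul_zero]
    · rw [multichooseExt_of_neg μ (by have := hr' htr; omega), zero_mul]

section Convolution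

variable {E : Type*} [AddCommGroup E] [Module ℝ E]

theorem sum_range_multichooseExt_smul_sum (μ ν : ℝ) {n : ℕ} {s : ℤ} (hs : s < n) (t : ℕ → ℤ)
    (ht : ∀ r, 0 ≤ t r) (w : ℕ → E) :
    ∑ j ∈ range n, multichooseExt μ (s - j) • ∑ r ∈ range n, multichooseExt ν (j - t r) • w r =
      ∑ r ∈ range n, multichooseExt (μ + ν) (s - t r) • w r := by
  simp only [smul_sum, smul_smul]
  rw [sum_comm]
  exact sum_congr rfl fun r _ => by rw [← sum_smul, sum_range_multichooseExt_mul μ ν hs (ht r)]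

theorem sum_range_multichooseExt_smul_of_le (μ : ℝ) {j n : ℕ} (hjn : j ≤ n) {s : ℤ} (hs : s < j)
    (w : ℕ → E) :
    ∑ r ∈ range j, multichooseExt μ (s - r) • w r = ∑ r ∈ range n, multichooseExt μ (s - r) • w r :=
  sum_subset (range_subset_range.mpr hjn) fun r _ hr => by
    rw [multichooseExt_of_neg μ (by simp only [mem_range, not_lt] at hr; omega), zero_smul]

end Convolution

theorem caputo_eq_sum_range {h α : ℝ} (hα : α < 1) {d : ℕ} (u : ℕ → Fin d → ℝ) {j n : ℕ}
    (hjn : j < n) :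
    caputo h α u j =
      h ^ (1 - α) • ∑ k ∈ range n, multichooseExt (1 - α) (j - k) • (h⁻¹ • (u (k + 1) - u k)) := by
  rw [caputo, if_pos hα, ← sum_range_multichooseExt_smul_of_le (1 - α) hjn (by omega)]
  refine congrArg _ (sum_congr rfl fun k hk => ?_)
  rw [cCoeff_eq_multichoose (by linarith), ← multichooseExt_natCast,
    Nat.cast_sub (Nat.lt_succ_iff.mp (mem_range.mp hk))]

theorem eq_add_sum_caputo {h α : ℝ} (hh : 0 < h) (hα₀ : 0 < α) (hα₁ : α ≤ 1) {d : ℕ}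
    (u : ℕ → Fin d → ℝ) (n : ℕ) :
    u n = u 0 + h ^ α • ∑ j ∈ range n, multichooseExt α (n - 1 - j) • caputo h α u j := by
  have htel : u n = u 0 + h • ∑ k ∈ range n, h⁻¹ • (u (k + 1) - u k) := by
    rw [← smul_sum, smul_smul, mul_inv_cancel₀ hh.ne', one_smul, sum_range_sub]
    abel
  rw [htel]
  congr 1
  symm
  rcases hα₁.lt_or_eq with hα | rfl
  · rw [sum_congr rfl fun j hj => by rw [caputo_eq_sum_range hα u (mem_range.mp hj)]]
    simp only [smul_comm _ (h ^ (1 - α))]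
    rw [← smul_sum, sum_range_multichooseExt_smul_sum α (1 - α) (by omega) (fun k => k)
      (fun k => by positivity), smul_smul, ← Real.rpow_add hh, add_sub_cancel, Real.rpow_one]
    refine congrArg _ (sum_congr rfl fun k hk => ?_)
    rw [multichooseExt_one_of_nonneg (by have := mem_range.mp hk; omega), one_smul]
  · rw [Real.rpow_one]
    refine congrArg _ (sum_congr rfl fun j hj => ?_)
    rw [multichooseExt_one_of_nonneg (by have := mem_range.mp hj; omega), one_smul, caputo,
      if_neg (lt_irrefl 1)]

section PhiKernels

variable {h α β : ℝ}

theorem phi_of_lt {k s : ℕ} {z : ℤ} (hz : z < k) : phi h α β k s z = 0 :=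
  if_neg hz.not_ge

theorem phiTilde_of_neg {k s : ℕ} {z : ℤ} (hz : z < 0) : phiTilde h α β k s z = 0 :=
  if_neg hz.not_ge

theorem phi_eq {k s : ℕ} (hμ : 0 ≤ k * α + s * β) (z : ℤ) :
    phi h α β k s z = h ^ (k * α + s * β) * multichooseExt (k * α + s * β + 1) (z - k) := by
  unfold phi
  split_ifs with hz
  · obtain ⟨m, hm⟩ : ∃ m : ℕ, z - k = m := ⟨(z - k).toNat, by omega⟩
    have hmR : (z : ℝ) - k = m := by exact_mod_cast hm
    rw [hm, multichooseExt_natCast, ← Real.Gamma_add_natCast_div_eq_multichoose _ (by positivity),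
      hmR, mul_comm]
    congr 3
    ring
  · rw [multichooseExt_of_neg _ (by omega), mul_zero]

theorem phiTilde_eq {k s : ℕ} (hμ : 0 < k * α + s * β) (z : ℤ) :
    phiTilde h α β k s z = h ^ (k * α + s * β) * multichooseExt (k * α + s * β) z := by
  unfold phiTilde
  split_ifs with hz
  · lift z to ℕ using hz
    rw [multichooseExt_natCast, ← Real.Gamma_add_natCast_div_eq_multichoose _ hμ, mul_comm]
    congr 3
    push_cast
    ring
  · rw [multichooseExt_of_neg _ (by omega), mul_zero]

theorem phiTilde_one_one (hα : 0 < α) (hβ : 0 < β) (z : ℤ) :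
    phiTilde h α β 1 1 z = h ^ (α + β) * multichooseExt (α + β) z := by
  simpa using phiTilde_eq (h := h) (k := 1) (s := 1) (by simp; positivity) z

theorem phi_zero_zero (n : ℕ) : phi h α β 0 0 n = 1 := by
  simp [phi_eq (k := 0) (s := 0) (by simp)]

theorem phi_one_zero (hα : 0 < α) (z : ℤ) :
    phi h α β 1 0 z = h ^ α * multichooseExt (α + 1) (z - 1) := by
  simpa using phi_eq (h := h) (β := β) (k := 1) (s := 0) (by simp; positivity) z

variable (hh : 0 < h) (hα : 0 < α) (hβ : 0 < β)
include hh hα hβ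

theorem sum_range_phiTilde_mul_phi {n : ℕ} {s t : ℤ} (hs : s < n) (ht : 0 ≤ t) (k j : ℕ) :
    ∑ r ∈ range n, phiTilde h α β 1 1 (s - r) * phi h α β k j (r - t) =
      phi h α β (k + 1) (j + 1) (s + 1 - t) := by
  have hμ : (0 : ℝ) ≤ k * α + j * β := by positivity
  have hconv := sum_range_multichooseExt_mul (α + β) (k * α + j * β + 1) hs (t := t + k)
    (by positivity)
  rw [phi_eq (by positivity), show ((k + 1 : ℕ) : ℝ) * α + ((j + 1 : ℕ) : ℝ) * β
      = (α + β) + (k * α + j * β) by push_cast; ring, Real.rpow_add hh, add_assoc,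
    show s + 1 - t - ((k + 1 : ℕ) : ℤ) = s - (t + k) by push_cast; ring, ← hconv, mul_sum]
  refine sum_congr rfl fun r _ => ?_
  rw [phiTilde_one_one hα hβ, phi_eq hμ, sub_sub]
  ring

theorem sum_range_phiTilde_mul_phiTilde {n : ℕ} {s t : ℤ} (hs : s < n) (ht : 0 ≤ t) {k j : ℕ}
    (hμ : 0 < k * α + j * β) :
    ∑ r ∈ range n, phiTilde h α β 1 1 (s - r) * phiTilde h α β k j (r - t) =
      phiTilde h α β (k + 1) (j + 1) (s - t) := by
  rw [phiTilde_eq (by positivity), show ((k + 1 : ℕ) : ℝ) * α + ((j + 1 : ℕ) : ℝ) * β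
      = (α + β) + (k * α + j * β) by push_cast; ring, Real.rpow_add hh,
    ← sum_range_multichooseExt_mul _ _ hs ht, mul_sum]
  refine sum_congr rfl fun r _ => ?_
  rw [phiTilde_one_one hα hβ, phiTilde_eq hμ]
  ring

end PhiKernels

theorem IsSolIVP.eq_volterra {h α β : ℝ} (hh : 0 < h) (hα₀ : 0 < α) (hα₁ : α ≤ 1) (hβ₀ : 0 < β)
    (hβ₁ : β ≤ 1) {d : ℕ} {f : ℕ → (Fin d → ℝ) → Fin d → ℝ} {xa x0 : Fin d → ℝ}
    {X : ℕ → Fin d → ℝ} (hX : IsSolIVP h α β f xa x0 X) (n : ℕ) :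
    X n = phi h α β 0 0 n • xa + phi h α β 1 0 n • x0 +
      ∑ r ∈ range n, phiTilde h α β 1 1 (n - 2 - r) • f r (X r) := by
  obtain ⟨hC, hXa, hZ0⟩ := hX
  have hZ : ∀ j ≤ n, caputo h α X j =
      x0 + h ^ β • ∑ r ∈ range n, multichooseExt β (j - (1 + r)) • f r (X r) := by
    intro j hj
    rw [eq_add_sum_caputo hh hβ₀ hβ₁ (caputo h α X) j, hZ0,
      sum_range_multichooseExt_smul_of_le β hj (s := j - 1) (by omega)]
    simp only [hC, sub_sub]
  have hkernel : ∑ j ∈ range n, multichooseExt α (n - 1 - j) = multichooseExt (α + 1) (n - 1) := by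
    simpa [multichooseExt_one_of_nonneg] using
      sum_range_multichooseExt_mul α 1 (s := n - 1) (n := n) (by omega) le_rfl
  have hconv : ∑ j ∈ range n, multichooseExt α (n - 1 - j) •
      ∑ r ∈ range n, multichooseExt β (j - (1 + r)) • f r (X r) =
        ∑ r ∈ range n, multichooseExt (α + β) (n - 2 - r) • f r (X r) := by
    rw [sum_range_multichooseExt_smul_sum α β (by omega) (fun r => 1 + r) fun r => by positivity]
    exact sum_congr rfl fun r _ => by rw [show (n : ℤ) - 1 - (1 + r) = n - 2 - r by ring]
  rw [eq_add_sum_caputo hh hα₀ hα₁ X n, hXa, phi_zero_zero, one_smul, phi_one_zero hα₀, add_assoc,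
    sum_congr rfl fun j hj => by rw [hZ j (mem_range.mp hj).le]]
  simp only [smul_add, sum_add_distrib, smul_comm (multichooseExt _ _) (h ^ β)]
  rw [← sum_smul, hkernel, ← smul_sum, hconv]
  simp only [smul_smul, smul_sum, phiTilde_one_one hα₀ hβ₀, Real.rpow_add hh, mul_assoc]

theorem eq_of_forall_eq_add_sum_range {E : Type*} [AddCommMonoid E] {X Y : ℕ → E} (g : ℕ → E)
    (F : ℕ → ℕ → E → E) (hX : ∀ n, X n = g n + ∑ r ∈ range n, F n r (X r))
    (hY : ∀ n, Y n = g n + ∑ r ∈ range n, F n r (Y r)) : X = Y := by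
  funext n
  induction n using Nat.strong_induction_on with
  | _ n ih =>
    rw [hX, hY]
    exact congrArg _ (sum_congr rfl fun r hr => by rw [ih r (mem_range.mp hr)])

section SolutionFormula

variable (h α β : ℝ) {d : ℕ} (A : Matrix (Fin d) (Fin d) ℝ) (γ : ℕ → Fin d → ℝ) (xa x0 : Fin d → ℝ)

noncomputable def ivpSolution (n : ℕ) : Fin d → ℝ :=
  (∑ k ∈ range (n + 1),
      A ^ k *ᵥ (phi h α β k k ((n : ℤ) - (k : ℤ)) • xa
        + phi h α β (k + 1) k ((n : ℤ) - (k : ℤ)) • x0))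
    + ∑ k ∈ range (n + 1),
        A ^ k *ᵥ ∑ r ∈ range (n + 1 - 2 * (k + 1)),
          phiTilde h α β (k + 1) (k + 1) ((n : ℤ) - 2 * ((k : ℤ) + 1) - (r : ℤ)) • γ r

-- The forcing sum is padded to `range M` (the extra terms vanish), so that convolving in `n`
-- acts on all summands over one common range.
noncomputable def ivpTerm (M k n : ℕ) : Fin d → ℝ :=
  phi h α β k k ((n : ℤ) - (k : ℤ)) • xa + phi h α β (k + 1) k ((n : ℤ) - (k : ℤ)) • x0
    + ∑ r ∈ range M, phiTilde h α β (k + 1) (k + 1) ((n : ℤ) - 2 * ((k : ℤ) + 1) - (r : ℤ)) • γ r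

variable {h α β A γ xa x0}

theorem ivpTerm_of_lt {M k n : ℕ} (hn : n < 2 * k) : ivpTerm h α β γ xa x0 M k n = 0 := by
  rw [ivpTerm, phi_of_lt (by omega), phi_of_lt (by push_cast; omega), zero_smul, zero_smul,
    zero_add, zero_add]
  exact sum_eq_zero fun r _ => by rw [phiTilde_of_neg (by omega), zero_smul]

theorem ivpSolution_eq_sum_ivpTerm {M N n : ℕ} (hN : n < N) (hM : n ≤ M) :
    ivpSolution h α β A γ xa x0 n = ∑ k ∈ range N, A ^ k *ᵥ ivpTerm h α β γ xa x0 M k n := by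
  rw [ivpSolution, ← sum_add_distrib]
  calc _ = ∑ k ∈ range (n + 1), A ^ k *ᵥ ivpTerm h α β γ xa x0 M k n := by
        refine sum_congr rfl fun k _ => ?_
        rw [← mulVec_add, ivpTerm]
        congr 2
        refine sum_subset (range_subset_range.mpr (by omega)) fun r _ hr => ?_
        rw [phiTilde_of_neg (by simp only [mem_range, not_lt] at hr; omega), zero_smul]
    _ = _ := sum_subset (range_subset_range.mpr hN) fun k _ hk => by
        rw [ivpTerm_of_lt (by simp only [mem_range, not_lt] at hk; omega), mulVec_zero]

theorem ivpTerm_zero (M n : ℕ) :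
    ivpTerm h α β γ xa x0 M 0 n = phi h α β 0 0 n • xa + phi h α β 1 0 n • x0 +
      ∑ r ∈ range M, phiTilde h α β 1 1 (n - 2 - r) • γ r := by
  simp [ivpTerm]

variable (hh : 0 < h) (hα : 0 < α) (hβ : 0 < β)
include hh hα hβ

theorem sum_range_phiTilde_smul_ivpTerm (M k n : ℕ) :
    ∑ r ∈ range n, phiTilde h α β 1 1 (n - 2 - r) • ivpTerm h α β γ xa x0 M k r =
      ivpTerm h α β γ xa x0 M (k + 1) n := by
  have hsn : (n : ℤ) - 2 < n := by omega
  have hγ (q : ℕ) :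
      ∑ r ∈ range n, phiTilde h α β 1 1 (n - 2 - r) *
          phiTilde h α β (k + 1) (k + 1) (r - 2 * (k + 1) - q) =
        phiTilde h α β (k + 1 + 1) (k + 1 + 1) (n - 2 * (((k + 1 : ℕ) : ℤ) + 1) - q) := by
    have := sum_range_phiTilde_mul_phiTilde hh hα hβ hsn (t := 2 * ((k : ℤ) + 1) + q)
      (by positivity) (k := k + 1) (j := k + 1) (by positivity)
    simp only [sub_sub] at this ⊢
    convert this using 2
    push_cast
    ring
  simp only [ivpTerm, smul_add, sum_add_distrib, smul_sum, smul_smul, ← sum_smul]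
  rw [sum_range_phiTilde_mul_phi hh hα hβ hsn (Int.natCast_nonneg k),
    sum_range_phiTilde_mul_phi hh hα hβ hsn (Int.natCast_nonneg k),
    show (n : ℤ) - 2 + 1 - k = n - ((k + 1 : ℕ) : ℤ) by push_cast; ring, sum_comm]
  exact congrArg _ (sum_congr rfl fun q _ => by rw [← sum_smul, hγ])

theorem ivpSolution_eq_volterra (n : ℕ) :
    ivpSolution h α β A γ xa x0 n = phi h α β 0 0 n • xa + phi h α β 1 0 n • x0 +
      ∑ r ∈ range n,
        phiTilde h α β 1 1 (n - 2 - r) • (A *ᵥ ivpSolution h α β A γ xa x0 r + γ r) := by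
  have hA : ∑ r ∈ range n, phiTilde h α β 1 1 (n - 2 - r) • A *ᵥ ivpSolution h α β A γ xa x0 r =
      ∑ k ∈ range n, A ^ (k + 1) *ᵥ ivpTerm h α β γ xa x0 n (k + 1) n := by
    calc _ = ∑ r ∈ range n, ∑ k ∈ range n,
          A ^ (k + 1) *ᵥ (phiTilde h α β 1 1 (n - 2 - r) • ivpTerm h α β γ xa x0 n k r) := by
          refine sum_congr rfl fun r hr => ?_
          rw [ivpSolution_eq_sum_ivpTerm (mem_range.mp hr) (mem_range.mp hr).le, mulVec_sum,
            smul_sum]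
          exact sum_congr rfl fun k _ => by rw [mulVec_mulVec, ← pow_succ', mulVec_smul]
      _ = _ := by
          rw [sum_comm]
          exact sum_congr rfl fun k _ => by
            rw [← mulVec_sum, sum_range_phiTilde_smul_ivpTerm hh hα hβ]
  rw [ivpSolution_eq_sum_ivpTerm (lt_add_one n) le_rfl, sum_range_succ', pow_zero, one_mulVec,
    ivpTerm_zero]
  simp only [smul_add, sum_add_distrib, hA]
  abel

end SolutionFormula

theorem semilinear_ivp_solution_general (h α β : ℝ) (hh : 0 < h)
    (hα1 : 0 < α) (hα2 : α ≤ 1) (hβ1 : 0 < β) (hβ2 : β ≤ 1)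
    (d : ℕ) (A : Matrix (Fin d) (Fin d) ℝ) (γ : ℕ → Fin d → ℝ)
    (xa x0 : Fin d → ℝ) (X : ℕ → Fin d → ℝ)
    (hX : IsSolIVP h α β (fun n x => A.mulVec x + γ n) xa x0 X) (n : ℕ) :
    X n = (∑ k ∈ Finset.range (n + 1),
        (A ^ k).mulVec
          (phi h α β k k ((n : ℤ) - (k : ℤ)) • xa
            + phi h α β (k + 1) k ((n : ℤ) - (k : ℤ)) • x0))
      + ∑ k ∈ Finset.range (n + 1),
          (A ^ k).mulVec
            (∑ r ∈ Finset.range (n + 1 - 2 * (k + 1)),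
              phiTilde h α β (k + 1) (k + 1) ((n : ℤ) - 2 * ((k : ℤ) + 1) - (r : ℤ)) • γ r) :=
  congrFun (eq_of_forall_eq_add_sum_range (fun n => phi h α β 0 0 n • xa + phi h α β 1 0 n • x0)
    (fun n r x => phiTilde h α β 1 1 (n - 2 - r) • (A *ᵥ x + γ r))
    (hX.eq_volterra hh hα1 hα2 hβ1 hβ2) (ivpSolution_eq_volterra hh hα1 hβ1)) n

theorem semilinear_ivp_solution (h α β : ℝ) (hh : 0 < h)
    (hα1 : 0 < α) (hα2 : α ≤ 1) (hβ1 : 0 < β) (hβ2 : β ≤ 1)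
    (d : ℕ) (hd : 1 ≤ d) (A : Matrix (Fin d) (Fin d) ℝ) (γ : ℕ → Fin d → ℝ)
    (xa x0 : Fin d → ℝ) (X : ℕ → Fin d → ℝ)
    (hX : IsSolIVP h α β (fun n x => A.mulVec x + γ n) xa x0 X) (n : ℕ) :
    X n = (∑ k ∈ Finset.range (n + 1),
        (A ^ k).mulVec
          (phi h α β k k ((n : ℤ) - (k : ℤ)) • xa
            + phi h α β (k + 1) k ((n : ℤ) - (k : ℤ)) • x0))
      + ∑ k ∈ Finset.range (n + 1),
          (A ^ k).mulVec
            (∑ r ∈ Finset.range (n + 1 - 2 * (k + 1)),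
              phiTilde h α β (k + 1) (k + 1) ((n : ℤ) - 2 * ((k : ℤ) + 1) - (r : ℤ)) • γ r) :=
  semilinear_ivp_solution_general h α β hh hα1 hα2 hβ1 hβ2 d A γ xa x0 X hX n
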